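/- Let n = 2p with p > 2 prime. The only bent homogeneous monomial rotation symmetric Boolean function in n variables is f₀ = ⊕_{i=0}^{p-1} x_i x_{p+i}. -/

import Mathlib

/-!
The shift `x ↦ x(· + 2)` has order `p` and fixes only the four functions that are constant on
the even and on the odd indices, so a Walsh coefficient `W(w)` with constant `w` is congruent
mod `p` to a sum of four signs. If the number of distinct shifts of the monomial were even, these
congruences would give `p ∣ W(0) W(1) = ±2^(2p)`. So that number is odd, and as `T ↦ T + p` is an
involution of the shifts, the monomial is invariant under `+p`. Then
`f(x) = g(x₀x_p, …, x_{p-1}x_{2p-1})` with `g(0) = 0`, and summing over the fibres of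
`(x_c, x_{p+c}) ↦ x_c x_{p+c}` gives `W(1) = -∑_u (-1)^(g(u) + Σu)`; this has absolute value `2^p`
only if `g(u) = Σu` for all `u`. Conversely `f₀` is the inner product of the two halves of `x`,
whose Walsh coefficients are `±2^p`.
-/

open Finset

namespace Equiv.Perm

variable {α : Type*} [DecidableEq α] {p n : ℕ} [Fact p.Prime] {σ : Perm α}

theorem card_modEq_card_filter_isFixedPt (hσ : σ ^ p ^ n = 1) (s : Finset α)
    (hs : ∀ x, σ x ∈ s ↔ x ∈ s) : #s ≡ #{x ∈ s | σ x = x} [MOD p] := by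
  have key := card_compl_support_modEq (p := p) (n := n) (σ := σ.subtypePerm hs)
    (by ext x; simp [subtypePerm_pow, hσ])
  have hfix : #({x | σ x ≠ x} : Finset s)ᶜ = #{x ∈ s | σ x = x} := by
    rw [← card_map (Function.Embedding.subtype _)]
    congr 1
    ext x
    simp [and_comm]
  rw [support_subtypePerm, Fintype.card_coe, hfix] at key
  exact key.symm

theorem sum_modEq_sum_filter_isFixedPt [Fintype α] (hσ : σ ^ p ^ n = 1) (f : α → ℤ)
    (hf : ∀ x, f (σ x) = f x) : ∑ x, f x ≡ ∑ x with σ x = x, f x [ZMOD p] := by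
  have hlevel (t : Finset α) :
      ∑ x ∈ t, f x = ∑ v ∈ univ.image f, (#{x ∈ t | f x = v} : ℤ) * v := by
    rw [← sum_fiberwise_of_maps_to (fun x _ => mem_image_of_mem f (mem_univ x))]
    refine sum_congr rfl fun v _ => ?_
    rw [sum_congr rfl fun x hx => (mem_filter.1 hx).2, sum_const, nsmul_eq_mul]
  rw [hlevel, hlevel]
  refine Int.ModEq.sum fun v _ => Int.ModEq.mul_right _ ?_
  have hcard := card_modEq_card_filter_isFixedPt hσ {x | f x = v} (by simp [hf])
  simp_rw [filter_filter, and_comm (b := f _ = v)] at hcard ⊢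
  exact Int.natCast_modEq_iff.2 hcard

end Equiv.Perm

namespace MRS

lemma sum_zmod_two {M : Type*} [AddCommMonoid M] (g : ZMod 2 → M) : ∑ a, g a = g 0 + g 1 :=
  Fin.sum_univ_two g

def chi (a : ZMod 2) : ℤ := (-1) ^ a.val

@[simp] lemma chi_zero : chi 0 = 1 := rfl

lemma chi_add (a b : ZMod 2) : chi (a + b) = chi a * chi b := by revert a b; decide

lemma chi_add_one (a : ZMod 2) : chi (a + 1) = -chi a := by revert a; decide

lemma abs_chi (a : ZMod 2) : |chi a| = 1 := by revert a; decide

lemma chi_eq_one_iff (a : ZMod 2) : chi a = 1 ↔ a = 0 := by revert a; decide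

lemma chi_sum {ι : Type*} (s : Finset ι) (f : ι → ZMod 2) :
    chi (∑ i ∈ s, f i) = ∏ i ∈ s, chi (f i) := by
  induction s using Finset.cons_induction with
  | empty => rfl
  | cons i s hi ih => rw [sum_cons, prod_cons, chi_add, ih]

def walsh {ι : Type*} [Fintype ι] [DecidableEq ι] (f : (ι → ZMod 2) → ZMod 2)
    (w : ι → ZMod 2) : ℤ :=
  ∑ x, chi (f x + ∑ i, w i * x i)

section SignSums

variable {α : Type*} [Fintype α]

lemma eq_zero_of_sum_chi_eq_card (g : α → ZMod 2) (h : ∑ a, chi (g a) = Fintype.card α)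
    (a : α) : g a = 0 := by
  have hnonneg (b : α) : 0 ≤ 1 - chi (g b) := by
    have : ∀ c : ZMod 2, chi c ≤ 1 := by decide
    linarith [this (g b)]
  have hsum : ∑ b, (1 - chi (g b)) = 0 := by simp [sum_sub_distrib, h]
  rw [← chi_eq_one_iff]
  linarith [(sum_eq_zero_iff_of_nonneg fun b _ => hnonneg b).1 hsum a (mem_univ a)]

lemma sum_chi_ne_neg_card (g : α → ZMod 2) {a₀ : α} (ha₀ : g a₀ = 0) :
    ∑ a, chi (g a) ≠ -Fintype.card α := by
  intro h
  have hflip : ∑ a, chi (g a + 1) = Fintype.card α := by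
    simp [chi_add_one, sum_neg_distrib, h]
  simpa [ha₀] using eq_zero_of_sum_chi_eq_card _ hflip a₀

end SignSums

section PairSums

variable {ι : Type*} [Fintype ι] [DecidableEq ι]

lemma sum_chi_inner_add_linear (a b : ι → ZMod 2) :
    ∑ v : ι → ZMod 2 × ZMod 2, chi (∑ c, ((v c).1 * (v c).2 + (a c * (v c).1 + b c * (v c).2)))
      = 2 ^ Fintype.card ι * chi (∑ c, a c * b c) := by
  have hpair : ∀ α β : ZMod 2,
      ∑ v : ZMod 2 × ZMod 2, chi (v.1 * v.2 + (α * v.1 + β * v.2)) = 2 * chi (α * β) := by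
    decide
  simp_rw [chi_sum]
  rw [← Fintype.prod_sum fun c (v : ZMod 2 × ZMod 2) => chi (v.1 * v.2 + (a c * v.1 + b c * v.2))]
  simp_rw [hpair, prod_mul_distrib, prod_const, card_univ]

lemma sum_chi_comp_mul_add_sum (g : (ι → ZMod 2) → ZMod 2) :
    ∑ v : ι → ZMod 2 × ZMod 2, chi (g (fun c => (v c).1 * (v c).2) + ∑ c, ((v c).1 + (v c).2))
      = (-1) ^ Fintype.card ι * ∑ u, chi (g u + ∑ c, u c) := by
  have hfiber : ∀ α : ZMod 2,
      ∑ v ∈ univ.filter (fun v : ZMod 2 × ZMod 2 => v.1 * v.2 = α), chi (v.1 + v.2) = -chi α := by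
    decide
  rw [← sum_fiberwise univ (fun v c => (v c).1 * (v c).2), mul_sum]
  refine sum_congr rfl fun u _ => ?_
  have hpi : univ.filter (fun v : ι → ZMod 2 × ZMod 2 => (fun c => (v c).1 * (v c).2) = u)
      = Fintype.piFinset fun c => univ.filter fun v : ZMod 2 × ZMod 2 => v.1 * v.2 = u c := by
    ext v
    simp [funext_iff]
  rw [sum_congr rfl fun v hv => by rw [(mem_filter.1 hv).2], hpi]
  simp_rw [chi_add, chi_sum, ← mul_sum]
  rw [← prod_univ_sum (fun c => univ.filter fun v : ZMod 2 × ZMod 2 => v.1 * v.2 = u c)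
    fun _ v => chi (v.1 + v.2)]
  simp_rw [hfiber]
  simp [prod_neg, mul_left_comm]

end PairSums

section Shift

variable {G M : Type*} [AddGroup G]

def shift (s : G) : Equiv.Perm (G → M) where
  toFun x i := x (i + s)
  invFun x i := x (i - s)
  left_inv x := by simp
  right_inv x := by simp

@[simp] lemma shift_apply (s : G) (x : G → M) (i : G) : shift s x i = x (i + s) := rfl

lemma shift_pow (s : G) (k : ℕ) : (shift s : Equiv.Perm (G → M)) ^ k = shift (k • s) := by
  induction k with
  | zero => ext; simp
  | succ k ih => ext x i; simp [pow_succ', ih, succ_nsmul', add_assoc]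

end Shift

section Translates

variable {G : Type*} [AddCommGroup G] [Fintype G] [DecidableEq G]

def translates (S : Finset G) : Finset (Finset G) :=
  univ.image fun j => S.image (· + j)

def mrs (S : Finset G) (x : G → ZMod 2) : ZMod 2 :=
  ∑ T ∈ translates S, ∏ t ∈ T, x t

omit [Fintype G] in
lemma image_add_image_add (T : Finset G) (a b : G) :
    (T.image (· + a)).image (· + b) = T.image (· + (a + b)) := by
  rw [image_image]
  exact image_congr fun t _ => add_assoc t a b

lemma image_add_mem_translates {S T : Finset G} (hT : T ∈ translates S) (s : G) :
    T.image (· + s) ∈ translates S := by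
  obtain ⟨j, -, rfl⟩ := mem_image.1 hT
  exact mem_image.2 ⟨j + s, mem_univ _, (image_add_image_add S j s).symm⟩

lemma image_add_eq_self_of_mem_translates {S T : Finset G} {h : G} (hS : S.image (· + h) = S)
    (hT : T ∈ translates S) : T.image (· + h) = T := by
  obtain ⟨j, -, rfl⟩ := mem_image.1 hT
  rw [image_add_image_add, add_comm, ← image_add_image_add, hS]

lemma mrs_shift (S : Finset G) (s : G) (x : G → ZMod 2) : mrs S (shift s x) = mrs S x := by
  refine sum_nbij' (·.image (· + s)) (·.image (· + -s))
    (fun T hT => image_add_mem_translates hT s) (fun T hT => image_add_mem_translates hT (-s))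
    (fun T _ => by simp only [image_add_image_add, add_neg_cancel, add_zero, image_id'])
    (fun T _ => by simp only [image_add_image_add, neg_add_cancel, add_zero, image_id'])
    fun T _ => ?_
  rw [prod_image fun a _ b _ h => add_right_cancel h]
  rfl

lemma even_card_translates {S : Finset G} {h : G} (hh : h + h = 0) (hS : S.image (· + h) ≠ S) :
    Even #(translates S) := by
  have hinv : Function.Involutive fun T : Finset G => T.image (· + h) := fun T => by
    simp only [image_add_image_add, hh, add_zero, image_id']
  have hσ : hinv.toPerm _ ^ 2 ^ 1 = 1 := by
    ext T : 1
    exact hinv T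
  have key := Equiv.Perm.card_modEq_card_filter_isFixedPt hσ (translates S) fun T =>
    ⟨fun hT => hinv T ▸ image_add_mem_translates hT h, fun hT => image_add_mem_translates hT h⟩
  have hnone : {T ∈ translates S | hinv.toPerm _ T = T} = ∅ := by
    refine filter_false_of_mem fun T hT hfix => hS ?_
    obtain ⟨j, -, rfl⟩ := mem_image.1 hT
    change (S.image (· + j)).image (· + h) = _ at hfix
    rw [image_add_image_add, add_comm, ← image_add_image_add] at hfix
    exact image_injective (add_left_injective j) hfix
  rw [hnone, card_empty] at key
  exact Nat.even_iff.2 key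

lemma mrs_const_zero {S : Finset G} (hS : S.Nonempty) : mrs S (fun _ => 0) = 0 := by
  refine sum_eq_zero fun T hT => ?_
  obtain ⟨j, -, rfl⟩ := mem_image.1 hT
  obtain ⟨t, ht⟩ := hS
  exact prod_eq_zero (mem_image_of_mem _ ht) rfl

lemma mrs_const_one (S : Finset G) : mrs S (fun _ => 1) = #(translates S) := by
  simp [mrs]

end Translates

section Halves

variable {p : ℕ}

def lo (c : Fin p) : Fin (2 * p) := ⟨c, by omega⟩

def hi (c : Fin p) : Fin (2 * p) := ⟨p + c, by omega⟩

@[to_additive]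
lemma prod_eq_prod_lo_mul_hi {M : Type*} [CommMonoid M] (g : Fin (2 * p) → M) :
    ∏ i, g i = ∏ c, g (lo c) * g (hi c) := by
  rw [← (finCongr (two_mul p)).symm.prod_comp, Fin.prod_univ_add, prod_mul_distrib]
  rfl

lemma exists_lo_or_hi (i : Fin (2 * p)) : (∃ c, lo c = i) ∨ ∃ c, hi c = i := by
  by_cases h : i.val < p
  · exact .inl ⟨⟨i, h⟩, rfl⟩
  · exact .inr ⟨⟨i - p, by omega⟩, Fin.ext (by simp [hi]; omega)⟩

def pairs {M : Type*} (x : Fin (2 * p) → M) (c : Fin p) : M × M := (x (lo c), x (hi c))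

lemma pairs_injective {M : Type*} : Function.Injective (pairs (p := p) (M := M)) := by
  intro x y h
  funext i
  rcases exists_lo_or_hi i with ⟨c, rfl⟩ | ⟨c, rfl⟩
  · exact congrArg Prod.fst (congrFun h c)
  · exact congrArg Prod.snd (congrFun h c)

lemma pairs_bijective : Function.Bijective (pairs (p := p) (M := ZMod 2)) := by
  refine (Fintype.bijective_iff_injective_and_card _).2 ⟨pairs_injective, ?_⟩
  simp [pow_mul]

lemma walsh_comp_pairs (Φ : (Fin p → ZMod 2 × ZMod 2) → ZMod 2) (w : Fin (2 * p) → ZMod 2) :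
    walsh (fun x => Φ (pairs x)) w
      = ∑ v, chi (Φ v + ∑ c, (w (lo c) * (v c).1 + w (hi c) * (v c).2)) := by
  refine Eq.trans (sum_congr rfl fun x _ => ?_) (pairs_bijective.sum_comp _)
  rw [sum_eq_sum_lo_add_hi]
  rfl

lemma walsh_inner_product (w : Fin (2 * p) → ZMod 2) :
    walsh (fun x => ∑ c, x (lo c) * x (hi c)) w = 2 ^ p * chi (∑ c, w (lo c) * w (hi c)) := by
  refine (walsh_comp_pairs (fun v => ∑ c, (v c).1 * (v c).2) w).trans ?_
  simp_rw [← sum_add_distrib]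
  rw [sum_chi_inner_add_linear, Fintype.card_fin]

variable [NeZero p]

def half : Fin (2 * p) := ⟨p, by have := NeZero.pos p; omega⟩

lemma half_add_half : half + half = (0 : Fin (2 * p)) :=
  Fin.ext (by simp [Fin.val_add, half, ← two_mul])

lemma lo_add_half (c : Fin p) : lo c + half = hi c :=
  Fin.ext (by simp only [Fin.val_add_eq_ite, lo, hi, half]; split_ifs <;> omega)

lemma hi_add_half (c : Fin p) : hi c + half = lo c :=
  Fin.ext (by simp only [Fin.val_add_eq_ite, lo, hi, half]; split_ifs <;> omega)

lemma image_add_half_eq_self_of_odd_card {S : Finset (Fin (2 * p))}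
    (h : Odd #(translates S)) : S.image (· + half) = S := by
  by_contra hS
  exact Nat.not_even_iff_odd.2 h (even_card_translates half_add_half hS)

section HalfInvariant

variable {T : Finset (Fin (2 * p))} (hT : T.image (· + half) = T)
include hT

lemma hi_mem_iff_lo_mem (c : Fin p) : hi c ∈ T ↔ lo c ∈ T := by
  constructor <;> intro h <;> rw [← hT] <;>
    exact mem_image.2 ⟨_, h, by simp [lo_add_half, hi_add_half]⟩

lemma prod_eq_prod_filter_lo_mem (x : Fin (2 * p) → ZMod 2) :
    ∏ t ∈ T, x t = ∏ c with lo c ∈ T, x (lo c) * x (hi c) := by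
  rw [← Fintype.prod_ite_mem, prod_eq_prod_lo_mul_hi, prod_filter]
  refine prod_congr rfl fun c _ => ?_
  simp only [hi_mem_iff_lo_mem hT]
  split_ifs <;> simp

lemma exists_lo_mem (hne : T.Nonempty) : ∃ c, lo c ∈ T := by
  obtain ⟨t, ht⟩ := hne
  rcases exists_lo_or_hi t with ⟨c, rfl⟩ | ⟨c, rfl⟩
  · exact ⟨c, ht⟩
  · exact ⟨c, (hi_mem_iff_lo_mem hT c).1 ht⟩

end HalfInvariant

def reducedMrs (S : Finset (Fin (2 * p))) (v : Fin p → ZMod 2) : ZMod 2 :=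
  ∑ T ∈ translates S, ∏ c with lo c ∈ T, v c

variable {S : Finset (Fin (2 * p))} (hS : S.image (· + half) = S)
include hS

lemma mrs_eq_reducedMrs (x : Fin (2 * p) → ZMod 2) :
    mrs S x = reducedMrs S (fun c => x (lo c) * x (hi c)) :=
  sum_congr rfl fun _ hT =>
    prod_eq_prod_filter_lo_mem (image_add_eq_self_of_mem_translates hS hT) x

lemma reducedMrs_zero (hne : S.Nonempty) : reducedMrs S 0 = 0 := by
  refine sum_eq_zero fun T hT => ?_
  have hTne : T.Nonempty := by
    obtain ⟨j, -, rfl⟩ := mem_image.1 hT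
    exact hne.image _
  obtain ⟨c, hc⟩ := exists_lo_mem (image_add_eq_self_of_mem_translates hS hT) hTne
  exact prod_eq_zero (mem_filter.2 ⟨mem_univ c, hc⟩) rfl

lemma walsh_one_eq_neg_sum_reducedMrs (hodd : Odd p) :
    walsh (mrs S) (fun _ => 1) = -∑ u, chi (reducedMrs S u + ∑ c, u c) := by
  rw [funext (mrs_eq_reducedMrs hS)]
  refine (walsh_comp_pairs (fun v => reducedMrs S fun c => (v c).1 * (v c).2) _).trans ?_
  simp only [one_mul]
  rw [sum_chi_comp_mul_add_sum, Fintype.card_fin, hodd.neg_one_pow, neg_one_mul]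

lemma reducedMrs_eq_sum (hodd : Odd p) (hne : S.Nonempty)
    (h1 : |walsh (mrs S) (fun _ => 1)| = 2 ^ p) (v : Fin p → ZMod 2) :
    reducedMrs S v = ∑ c, v c := by
  have hcard : (2 : ℤ) ^ p = Fintype.card (Fin p → ZMod 2) := by simp
  rw [walsh_one_eq_neg_sum_reducedMrs hS hodd, abs_neg, abs_eq (by positivity), hcard] at h1
  rcases h1 with h | h
  · exact CharTwo.add_eq_zero.1 (eq_zero_of_sum_chi_eq_card _ h v)
  · exact absurd h (sum_chi_ne_neg_card _ (a₀ := 0) (by simp [reducedMrs_zero hS hne]))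

end Halves

section Alternating

variable {p : ℕ}

def alternating (a b : ZMod 2) : Fin (2 * p) → ZMod 2 := fun i => if i.val % 2 = 0 then a else b

lemma alternating_self (a : ZMod 2) : alternating (p := p) a a = fun _ => a :=
  funext fun _ => ite_self a

variable [NeZero p]

lemma val_one_fin_two_mul : ((1 : Fin (2 * p)) : ℕ) = 1 := by
  rw [Fin.val_one', Nat.mod_eq_of_lt (by have := NeZero.pos p; omega)]

open scoped Fin.CommRing in
lemma val_nsmul_two (k : ℕ) : ((k • 2 : Fin (2 * p)) : ℕ) = k * 2 % (2 * p) := by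
  rw [nsmul_eq_mul, show (2 : Fin (2 * p)) = ((2 : ℕ) : Fin (2 * p)) from Nat.cast_ofNat.symm,
    ← Nat.cast_mul, Fin.val_natCast]

lemma alternating_zero (a b : ZMod 2) : alternating (p := p) a b 0 = a := by
  simp [alternating]

lemma alternating_one (a b : ZMod 2) : alternating (p := p) a b 1 = b := by
  simp [alternating]

lemma shift_one_alternating (a b : ZMod 2) :
    shift 1 (alternating (p := p) a b) = alternating b a := by
  funext i
  have := i.isLt
  simp only [shift_apply, alternating, Fin.val_add_eq_ite, val_one_fin_two_mul]
  split_ifs <;> first | rfl | omega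

lemma shift_two_alternating (a b : ZMod 2) :
    shift 2 (alternating (p := p) a b) = alternating a b := by
  funext i
  have := i.isLt
  have h2 : ((2 : Fin (2 * p)) : ℕ) % 2 = 0 := by
    rw [Fin.coe_ofNat_eq_mod, Nat.mod_mod_of_dvd _ (dvd_mul_right 2 p)]
  simp only [shift_apply, alternating, Fin.val_add_eq_ite]
  split_ifs <;> first | rfl | omega

lemma shift_two_pow {M : Type*} : (shift 2 : Equiv.Perm (Fin (2 * p) → M)) ^ p = 1 := by
  have h : p • (2 : Fin (2 * p)) = 0 := Fin.ext (by simp [val_nsmul_two, mul_comm p 2])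
  ext x i
  simp [shift_pow, h]

lemma eq_alternating_of_shift_two {x : Fin (2 * p) → ZMod 2} (hx : shift 2 x = x) :
    x = alternating (x 0) (x 1) := by
  funext i
  have hk (k : ℕ) : shift (k • 2) x = x := by
    rw [← shift_pow]
    exact Equiv.Perm.pow_apply_eq_self_of_apply_eq_self hx k
  have hval : (((i.val / 2) • 2 : Fin (2 * p)) : ℕ) = i.val / 2 * 2 := by
    rw [val_nsmul_two, Nat.mod_eq_of_lt (by omega)]
  have key (r : Fin (2 * p)) (hr : r.val = i.val % 2) : x i = x r := by
    have hi : r + (i.val / 2) • 2 = i :=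
      Fin.ext (by rw [Fin.val_add_eq_ite, hval]; split_ifs <;> omega)
    rw [← hi]
    exact congrFun (hk _) r
  unfold alternating
  split_ifs with h
  · exact key 0 (by simp [h])
  · exact key 1 (by rw [val_one_fin_two_mul]; omega)

lemma sum_filter_shift_two_eq (g : (Fin (2 * p) → ZMod 2) → ℤ) :
    ∑ x with shift 2 x = x, g x = ∑ a, ∑ b, g (alternating a b) := by
  rw [← Fintype.sum_prod_type']
  refine sum_nbij' (fun x => (x 0, x 1)) (fun ab => alternating ab.1 ab.2) (by simp)
    (by simp [shift_two_alternating]) (fun x hx => ?_)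
    (fun ab _ => by simp [alternating_zero, alternating_one]) fun x hx => ?_
  · exact (eq_alternating_of_shift_two (mem_filter.1 hx).2).symm
  · exact congrArg g (eq_alternating_of_shift_two (mem_filter.1 hx).2)

lemma sum_alternating (hodd : Odd p) (a b : ZMod 2) :
    ∑ i, alternating (p := p) a b i = a + b := by
  have hpair (c : Fin p) : alternating a b (lo c) + alternating a b (hi c) = a + b := by
    have hpar : (p + c.val) % 2 = 1 - c.val % 2 := by rcases hodd with ⟨k, rfl⟩; omega
    rcases Nat.mod_two_eq_zero_or_one c.val with h | h <;>
      simp [alternating, lo, hi, hpar, h, add_comm]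
  simp [sum_eq_sum_lo_add_hi, hpair, ZMod.natCast_eq_one_iff_odd.2 hodd]

lemma walsh_const_modEq (hp : p.Prime) (hodd : Odd p) (f : (Fin (2 * p) → ZMod 2) → ZMod 2)
    (hf : ∀ x, f (shift 2 x) = f x) (e : ZMod 2) :
    walsh f (fun _ => e) ≡ ∑ a, ∑ b, chi (f (alternating a b) + e * (a + b)) [ZMOD p] := by
  have := Fact.mk hp
  have hlin (x : Fin (2 * p) → ZMod 2) : ∑ i, e * shift 2 x i = ∑ i, e * x i :=
    Equiv.sum_comp (Equiv.addRight (2 : Fin (2 * p))) fun i => e * x i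
  have hcong := Equiv.Perm.sum_modEq_sum_filter_isFixedPt (n := 1) (σ := shift 2)
    (by rw [pow_one]; exact shift_two_pow) (fun x => chi (f x + ∑ i, e * x i))
    fun x => by simp only [hf, hlin]
  rw [sum_filter_shift_two_eq] at hcong
  simpa only [walsh, ← mul_sum, sum_alternating hodd] using hcong

lemma odd_card_translates (hp : p.Prime) (hodd : Odd p) {S : Finset (Fin (2 * p))}
    (hS : S.Nonempty) (h0 : |walsh (mrs S) (fun _ => 0)| = 2 ^ p)
    (h1 : |walsh (mrs S) (fun _ => 1)| = 2 ^ p) : Odd #(translates S) := by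
  by_contra heven
  have hcard : (#(translates S) : ZMod 2) = 0 :=
    ZMod.natCast_eq_zero_iff_even.2 (Nat.not_odd_iff_even.1 heven)
  have hswap : mrs S (alternating 1 0) = mrs S (alternating 0 1) := by
    rw [← shift_one_alternating, mrs_shift]
  have hmod (e : ZMod 2) :
      walsh (mrs S) (fun _ => e) ≡ 2 + 2 * chi (mrs S (alternating 0 1) + e) [ZMOD p] := by
    refine (walsh_const_modEq hp hodd _ (mrs_shift S 2) e).trans ?_
    simp only [sum_zmod_two, alternating_self, mrs_const_zero hS, mrs_const_one, hcard, hswap,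
      CharTwo.add_self_eq_zero, add_zero, zero_add, mul_zero, mul_one, chi_zero]
    rw [show ∀ c : ℤ, 1 + c + (c + 1) = 2 + 2 * c from fun c => by ring]
  -- `(2 + 2χ)(2 - 2χ) = 4 - 4χ² = 0`
  have hprod : walsh (mrs S) (fun _ => 0) * walsh (mrs S) (fun _ => 1) ≡ 0 [ZMOD p] := by
    have hzero : ∀ a : ZMod 2, (2 + 2 * chi (a + 0)) * (2 + 2 * chi (a + 1)) = 0 := by decide
    simpa only [hzero] using (hmod 0).mul (hmod 1)
  have habs : |walsh (mrs S) (fun _ => 0) * walsh (mrs S) (fun _ => 1)| = 2 ^ (p + p) := by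
    rw [abs_mul, h0, h1, pow_add]
  have hdvd : (p : ℤ) ∣ 2 ^ (p + p) := habs ▸ (dvd_abs _ _).2 (Int.modEq_zero_iff_dvd.1 hprod)
  have hp2 : p = 2 := (Nat.prime_dvd_prime_iff_eq hp Nat.prime_two).1
    (hp.dvd_of_dvd_pow (n := p + p) (by exact_mod_cast hdvd))
  subst hp2
  exact absurd hodd (by decide)

end Alternating

end MRS

open MRS in
theorem stmt17 (p : ℕ) (hp : p.Prime) (hp2 : 2 < p) (S : Finset (Fin (2*p)))
    (hS0 : (⟨0, by omega⟩ : Fin (2*p)) ∈ S) :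
    (∀ w : Fin (2*p) → ZMod 2,
      (∑ x : Fin (2*p) → ZMod 2,
        (-1 : ℤ) ^ (((∑ T ∈ Finset.univ.image (fun j : Fin (2*p) => S.image (· + j)),
            ∏ t ∈ T, x t) + ∑ i, w i * x i).val)) = 2 ^ p ∨
      (∑ x : Fin (2*p) → ZMod 2,
        (-1 : ℤ) ^ (((∑ T ∈ Finset.univ.image (fun j : Fin (2*p) => S.image (· + j)),
            ∏ t ∈ T, x t) + ∑ i, w i * x i).val)) = -(2 ^ p))
    ↔ (∀ x : Fin (2*p) → ZMod 2,
        (∑ T ∈ Finset.univ.image (fun j : Fin (2*p) => S.image (· + j)), ∏ t ∈ T, x t)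
          = ∑ i : Fin p, x ⟨i.val, by have := i.isLt; omega⟩ *
              x ⟨p + i.val, by have := i.isLt; omega⟩) := by
  have : NeZero p := ⟨hp.ne_zero⟩
  have hodd : Odd p := hp.odd_of_ne_two hp2.ne'
  have hne : S.Nonempty := ⟨_, hS0⟩
  show (∀ w, walsh (mrs S) w = 2 ^ p ∨ walsh (mrs S) w = -2 ^ p) ↔
    ∀ x, mrs S x = ∑ c, x (lo c) * x (hi c)
  simp_rw [← abs_eq (by positivity : (0 : ℤ) ≤ 2 ^ p)]
  constructor
  · intro hbent x
    have hS := image_add_half_eq_self_of_odd_card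
      (odd_card_translates hp hodd hne (hbent _) (hbent _))
    rw [mrs_eq_reducedMrs hS, reducedMrs_eq_sum hS hodd hne (hbent _)]
  · intro hf w
    rw [show mrs S = _ from funext hf, walsh_inner_product, abs_mul, abs_chi, mul_one, abs_pow,
      abs_two]
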